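/- Let ζ ∈ (0,1], let r, t > 0 satisfy r − t ≥ (2/ζ)t, and let ξ, η ∈ [0,1]. Define λ(t) = r + tη − 2tηξ and Θ̃(r,t,η,ξ) = (λ(t)² + r² − t²η²)/(2r·λ(t)). Then the partial derivative of Θ̃ with respect to t satisfies −5ζ/(3·λ(t)) ≤ ∂Θ̃/∂t (r,t,η,ξ) ≤ 0. -/

import Mathlib

open Set

/-- `λ(t) = r + tη - 2tηξ`. -/
noncomputable def lamf (r t η ξ : ℝ) : ℝ := r + t * η - 2 * t * η * ξ

/-- `Θ̃(r,t,η,ξ) = (λ(t)² + r² - t²η²)/(2r·λ(t))`. -/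
noncomputable def Thetaf (r t η ξ : ℝ) : ℝ :=
  ((lamf r t η ξ) ^ 2 + r ^ 2 - t ^ 2 * η ^ 2) / (2 * r * lamf r t η ξ)

/-!
With `λ = r + t·η(1 - 2ξ)`, the quotient rule and `λ² - r² = tη(1 - 2ξ)(λ + r)` give
`∂Θ̃/∂t = -2tη²ξ(1 - ξ)(λ + r)/(rλ²) ≤ 0`. For the lower bound use `η²ξ(1 - ξ) ≤ 1/4`,
`r - t ≤ λ ≤ r + t < 2r` and `2t ≤ ζ(r - t) ≤ ζλ`: the derivative is at least `-3ζ/(4λ)`.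
-/

lemma lamf_eq_add_mul (r t η ξ : ℝ) : lamf r t η ξ = r + t * (η * (1 - 2 * ξ)) := by
  simp only [lamf]; ring

lemma hasDerivAt_lamf (r t η ξ : ℝ) :
    HasDerivAt (fun s => lamf r s η ξ) (η * (1 - 2 * ξ)) t := by
  simp_rw [lamf_eq_add_mul]
  simpa using ((hasDerivAt_id t).mul_const (η * (1 - 2 * ξ))).const_add r

lemma hasDerivAt_Thetaf {r t : ℝ} (η ξ : ℝ) (hr : r ≠ 0) (hl : lamf r t η ξ ≠ 0) :
    HasDerivAt (fun s => Thetaf r s η ξ)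
      (-(2 * t * (η ^ 2 * ξ * (1 - ξ)) * (lamf r t η ξ + r)) / (r * lamf r t η ξ ^ 2)) t := by
  have hlam := hasDerivAt_lamf r t η ξ
  have hnum := ((hlam.fun_pow 2).add_const (r ^ 2)).fun_sub ((hasDerivAt_pow 2 t).mul_const (η ^ 2))
  refine (hnum.fun_div (hlam.const_mul (2 * r)) (by positivity)).congr_deriv ?_
  rw [div_eq_div_iff (by positivity) (by positivity)]
  simp only [lamf]
  ring

lemma lamf_mem_Icc {r t η ξ : ℝ} (ht : 0 ≤ t) (hξ : ξ ∈ Icc (0 : ℝ) 1) (hη : η ∈ Icc (0 : ℝ) 1) :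
    lamf r t η ξ ∈ Icc (r - t) (r + t) := by
  obtain ⟨hξ0, hξ1⟩ := hξ
  obtain ⟨hη0, hη1⟩ := hη
  have hslope : |η * (1 - 2 * ξ)| ≤ 1 := by
    rw [abs_mul, abs_of_nonneg hη0]
    exact mul_le_one₀ hη1 (abs_nonneg _) (abs_le.2 ⟨by linarith, by linarith⟩)
  obtain ⟨hlo, hhi⟩ := abs_le.1 hslope
  rw [lamf_eq_add_mul]
  constructor <;> nlinarith

lemma sq_mul_mul_one_sub_mem_Icc {η ξ : ℝ} (hξ : ξ ∈ Icc (0 : ℝ) 1) (hη : η ∈ Icc (0 : ℝ) 1) :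
    η ^ 2 * ξ * (1 - ξ) ∈ Icc (0 : ℝ) (1 / 4) := by
  obtain ⟨hξ0, hξ1⟩ := hξ
  obtain ⟨hη0, hη1⟩ := hη
  have hξ' : ξ * (1 - ξ) ≤ 1 / 4 := by nlinarith [sq_nonneg (2 * ξ - 1)]
  have hη' : η ^ 2 ≤ 1 := pow_le_one₀ hη0 hη1
  rw [mul_assoc]
  exact ⟨by positivity, by nlinarith [mul_nonneg hξ0 (sub_nonneg.2 hξ1)]⟩

theorem stmt_17_general (ζ : ℝ) (hζ0 : 0 < ζ)
    (r t : ℝ) (hr : 0 < r) (ht : 0 < t) (hrt : (2 / ζ) * t ≤ r - t)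
    (ξ η : ℝ) (hξ : ξ ∈ Icc (0 : ℝ) 1) (hη : η ∈ Icc (0 : ℝ) 1) :
    -(5 * ζ / (3 * lamf r t η ξ)) ≤ deriv (fun t' : ℝ => Thetaf r t' η ξ) t ∧
    deriv (fun t' : ℝ => Thetaf r t' η ξ) t ≤ 0 := by
  have htζ : 2 * t ≤ ζ * (r - t) := by
    rw [div_mul_eq_mul_div, div_le_iff₀ hζ0] at hrt
    linarith
  have hrt' : 0 < r - t := pos_of_mul_pos_right (by linarith) hζ0.le
  obtain ⟨hlo, hhi⟩ := lamf_mem_Icc (r := r) ht.le hξ hη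
  obtain ⟨hq0, hq⟩ := sq_mul_mul_one_sub_mem_Icc hξ hη
  set ℓ := lamf r t η ξ
  set q := η ^ 2 * ξ * (1 - ξ)
  have hℓ : 0 < ℓ := by linarith
  rw [(hasDerivAt_Thetaf η ξ hr.ne' hℓ.ne').deriv]
  constructor
  · have h2t : 2 * t ≤ ζ * ℓ := htζ.trans (mul_le_mul_of_nonneg_left hlo hζ0.le)
    have hℓr : ℓ + r ≤ 3 * r := by linarith
    have h2tℓr : 2 * t * (ℓ + r) ≤ 3 * ζ * r * ℓ := by
      nlinarith [mul_le_mul_of_nonneg_right h2t (by positivity : 0 ≤ ℓ + r),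
        mul_le_mul_of_nonneg_left hℓr (by positivity : 0 ≤ ζ * ℓ)]
    calc -(5 * ζ / (3 * ℓ)) ≤ -(2 * t * (1 / 4) * (ℓ + r)) / (r * ℓ ^ 2) := by
          rw [neg_div, neg_le_neg_iff, div_le_div_iff₀ (by positivity) (by positivity)]
          nlinarith [mul_le_mul_of_nonneg_left h2tℓr hℓ.le, mul_pos (mul_pos hζ0 hr) (mul_pos hℓ hℓ)]
      _ ≤ -(2 * t * q * (ℓ + r)) / (r * ℓ ^ 2) := by gcongr
  · exact div_nonpos_of_nonpos_of_nonneg (neg_nonpos.2 (by positivity)) (by positivity)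

/-- bounds on the `t`-derivative of `Θ̃`. -/
theorem stmt_17 (ζ : ℝ) (hζ0 : 0 < ζ) (hζ1 : ζ ≤ 1)
    (r t : ℝ) (hr : 0 < r) (ht : 0 < t) (hrt : (2 / ζ) * t ≤ r - t)
    (ξ η : ℝ) (hξ : ξ ∈ Icc (0 : ℝ) 1) (hη : η ∈ Icc (0 : ℝ) 1) :
    -(5 * ζ / (3 * lamf r t η ξ)) ≤ deriv (fun t' : ℝ => Thetaf r t' η ξ) t ∧
    deriv (fun t' : ℝ => Thetaf r t' η ξ) t ≤ 0 :=
  stmt_17_general ζ hζ0 r t hr ht hrt ξ η hξ hη
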